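/- For all integers n ≥ 0 and k ≥ 1, every sequence of real numbers ᾱ = (α₀, α₁, …, α_{n−1}) and all nonzero real numbers ℓ₁, …, ℓ_k, the multiparameter poly-Cauchy numbers of the first kind are expressed through the multiparameter poly-Bernoulli numbers by C_{n,L}^{(k)}(ᾱ) = Σ_{j=0}^{n} Σ_{m=j}^{n} (−1)^{m−j} (s_ᾱ(m,j) s_ᾱ(n,m) / m!) B_{j,ᾱ,L}^{(k)}. -/

import Mathlib

/-!
The integrand is `∑ₘ s(n,m) tᵐ`, and the iterated integral of `tᵐ` is
`(ℓ₁⋯ℓ_k)^(m+1) / (m+1)^k`. On the right-hand side, after exchanging the sums over `j` and `m`,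
the inner sum collapses because the triangular matrices `(s(m,j))` and `(S(j,p))` are inverse
to each other: both describe the change of basis between the monomials and the Newton basis
`∏_{i<q} (x - αᵢ)`, which is linearly independent since its `q`-th member has degree `q`.
The signs combine to `(-1)^(m-p)`, which is `1` on the diagonal `p = m`.
-/

open Finset

/-- Iterated integral ∫₀^{ℓ₁}⋯∫₀^{ℓ_k} f(x₁x₂⋯x_k) dx₁⋯dx_k over the list of bounds. -/
noncomputable def iterInt : List ℝ → (ℝ → ℝ) → ℝ
  | [], f => f 1
  | l :: ls, f => ∫ x in (0:ℝ)..l, iterInt ls (fun y => f (x * y))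

open Polynomial

lemma iterInt_sum_mul_pow (N : ℕ) (ls : List ℝ) (c : ℕ → ℝ) :
    iterInt ls (fun t => ∑ m ∈ range N, c m * t ^ m) =
      ∑ m ∈ range N, c m * ls.prod ^ (m + 1) / ((m : ℝ) + 1) ^ ls.length := by
  induction ls generalizing c with
  | nil => simp [iterInt]
  | cons l ls ih =>
    have hinner : ∀ x : ℝ, iterInt ls (fun y => ∑ m ∈ range N, c m * (x * y) ^ m) =
        ∑ m ∈ range N, c m * ls.prod ^ (m + 1) / ((m : ℝ) + 1) ^ ls.length * x ^ m := by
      intro x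
      simp_rw [mul_pow, ← mul_assoc]
      rw [ih]
      exact sum_congr rfl fun m _ => by ring
    simp only [iterInt, hinner]
    rw [intervalIntegral.integral_finsetSum fun m _ => by
      apply Continuous.intervalIntegrable; fun_prop]
    refine sum_congr rfl fun m _ => ?_
    rw [intervalIntegral.integral_const_mul, integral_pow, List.prod_cons, List.length_cons]
    field_simp
    ring

lemma sum_range_sum_range_comm_Icc {M : Type*} [AddCommMonoid M] (N : ℕ) (f : ℕ → ℕ → M) :
    ∑ j ∈ range (N + 1), ∑ q ∈ range (j + 1), f j q =
      ∑ q ∈ range (N + 1), ∑ j ∈ Icc q N, f j q :=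
  sum_comm' fun j q => by simp only [mem_range, mem_Icc]; omega

section Newton

variable {R : Type*} [CommRing R] [IsDomain R]

noncomputable def newtonSequence (α : ℕ → R) : Polynomial.Sequence R where
  elems' q := ∏ i ∈ range q, (X - C (α i))
  degree_eq' q := by simp [degree_prod]

lemma newtonSequence_eval (α : ℕ → R) (q : ℕ) (x : R) :
    (newtonSequence α q).eval x = ∏ i ∈ range q, (x - α i) := by
  simp [newtonSequence, eval_prod]

theorem sum_Icc_mul_eq_ite_of_newton_expansions [Infinite R] {α : ℕ → R} {s S : ℕ → ℕ → R}
    {m : ℕ}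
    (hs : ∀ x : R, ∏ i ∈ range m, (x - α i) = ∑ j ∈ range (m + 1), s m j * x ^ j)
    (hS : ∀ j ≤ m, ∀ x : R, x ^ j = ∑ q ∈ range (j + 1), S j q * ∏ i ∈ range q, (x - α i))
    {p : ℕ} (hp : p ≤ m) :
    ∑ j ∈ Icc p m, s m j * S j p = if p = m then 1 else 0 := by
  have hQm : newtonSequence α m = ∑ j ∈ range (m + 1), s m j • (X : R[X]) ^ j :=
    Polynomial.funext fun x => by simp [newtonSequence_eval, eval_finsetSum, hs]
  have hX : ∀ j ≤ m, (X : R[X]) ^ j = ∑ q ∈ range (j + 1), S j q • newtonSequence α q :=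
    fun j hj => Polynomial.funext fun x => by simp [newtonSequence_eval, eval_finsetSum, hS j hj]
  have hexpand : ∑ q ∈ range (m + 1), (∑ j ∈ Icc q m, s m j * S j q) • newtonSequence α q =
      newtonSequence α m := by
    simp only [hQm, sum_smul, ← sum_range_sum_range_comm_Icc]
    refine sum_congr rfl fun j hj => ?_
    rw [hX j (Nat.lt_succ_iff.mp (mem_range.mp hj)), smul_sum]
    simp only [smul_smul]
  have hdiff : ∑ q ∈ range (m + 1),
      ((∑ j ∈ Icc q m, s m j * S j q) - if q = m then 1 else 0) • newtonSequence α q = 0 := by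
    simp only [sub_smul, sum_sub_distrib, hexpand, ite_smul, one_smul, zero_smul,
      sum_ite_eq', mem_range, Nat.lt_succ_self, if_true, sub_self]
  exact sub_eq_zero.mp <| linearIndependent_iff'.mp (newtonSequence α).linearIndependent _ _
    hdiff p (mem_range.mpr (Nat.lt_succ_of_le hp))

end Newton

theorem sum_neg_one_pow_mul_sum_eq_of_inverse {R : Type*} [CommRing R] {s S : ℕ → ℕ → R}
    {m : ℕ} (hinv : ∀ p ≤ m, ∑ j ∈ Icc p m, s m j * S j p = if p = m then 1 else 0)
    (b : ℕ → R) :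
    ∑ j ∈ range (m + 1), (-1) ^ (m - j) * s m j *
        ∑ p ∈ range (j + 1), (-1) ^ (j - p) * S j p * b p = b m := by
  simp only [mul_sum]
  rw [sum_range_sum_range_comm_Icc]
  have hsign : ∀ p ∈ range (m + 1),
      ∑ j ∈ Icc p m, (-1) ^ (m - j) * s m j * ((-1) ^ (j - p) * S j p * b p) =
        (-1) ^ (m - p) * b p * ∑ j ∈ Icc p m, s m j * S j p := by
    intro p _
    rw [mul_sum]
    refine sum_congr rfl fun j hj => ?_
    obtain ⟨hpj, hjm⟩ := mem_Icc.mp hj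
    rw [show m - p = (m - j) + (j - p) by omega, pow_add]
    ring
  rw [sum_congr rfl hsign]
  rw [sum_congr rfl fun p hp => by rw [hinv p (Nat.lt_succ_iff.mp (mem_range.mp hp))]]
  simp

theorem stmt12_general (n k : ℕ) (α : ℕ → ℝ) (L : Fin k → ℝ)
    (s : ℕ → ℕ → ℝ) (S : ℕ → ℕ → ℝ)
    (hs : ∀ m ≤ n, ∀ x : ℝ,
      ∏ i ∈ range m, (x - α i) = ∑ j ∈ range (m + 1), s m j * x ^ j)
    (hS : ∀ p ≤ n, ∀ x : ℝ,
      x ^ p = ∑ m ∈ range (p + 1), S p m * ∏ i ∈ range m, (x - α i)) :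
    iterInt (List.ofFn L) (fun t => ∏ i ∈ range n, (t - α i)) =
      ∑ j ∈ range (n + 1), ∑ m ∈ Icc j n,
        (-1 : ℝ) ^ (m - j) * (s m j * s n m / (m.factorial : ℝ)) *
          (∑ p ∈ range (j + 1),
            (-1 : ℝ) ^ (j - p) * (p.factorial : ℝ) * S j p *
              (∏ i, L i) ^ (p + 1) / ((p : ℝ) + 1) ^ k) := by
  rw [funext (hs n le_rfl), iterInt_sum_mul_pow, List.prod_ofFn, List.length_ofFn,
    ← sum_range_sum_range_comm_Icc]
  refine sum_congr rfl fun m hm => ?_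
  have hmn : m ≤ n := Nat.lt_succ_iff.mp (mem_range.mp hm)
  have hinv := sum_neg_one_pow_mul_sum_eq_of_inverse
    (fun p hp => sum_Icc_mul_eq_ite_of_newton_expansions (hs m hmn)
      (fun j hj => hS j (hj.trans hmn)) hp)
    (fun p => (p.factorial : ℝ) * ((∏ i, L i) ^ (p + 1) / ((p : ℝ) + 1) ^ k))
  calc s n m * (∏ i, L i) ^ (m + 1) / ((m : ℝ) + 1) ^ k
      = s n m / m.factorial * (m.factorial * ((∏ i, L i) ^ (m + 1) / ((m : ℝ) + 1) ^ k)) := by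
        field_simp
    _ = _ := by
        rw [← hinv, mul_sum]
        refine sum_congr rfl fun j _ => ?_
        simp only [mul_sum]
        exact sum_congr rfl fun p _ => by ring

theorem stmt12 (n k : ℕ) (hk : 1 ≤ k) (α : ℕ → ℝ) (L : Fin k → ℝ)
    (hL : ∀ i, L i ≠ 0) (s : ℕ → ℕ → ℝ) (S : ℕ → ℕ → ℝ)
    (hs : ∀ m ≤ n, ∀ x : ℝ,
      ∏ i ∈ range m, (x - α i) = ∑ j ∈ range (m + 1), s m j * x ^ j)
    (hS : ∀ p ≤ n, ∀ x : ℝ,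
      x ^ p = ∑ m ∈ range (p + 1), S p m * ∏ i ∈ range m, (x - α i)) :
    iterInt (List.ofFn L) (fun t => ∏ i ∈ range n, (t - α i)) =
      ∑ j ∈ range (n + 1), ∑ m ∈ Icc j n,
        (-1 : ℝ) ^ (m - j) * (s m j * s n m / (m.factorial : ℝ)) *
          (∑ p ∈ range (j + 1),
            (-1 : ℝ) ^ (j - p) * (p.factorial : ℝ) * S j p *
              (∏ i, L i) ^ (p + 1) / ((p : ℝ) + 1) ^ k) :=
  stmt12_general n k α L s S hs hS
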